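/- arXiv:2002.03626 — 2 statements merged into one kernel-verified Lean document; each statement's English description precedes it below -/
import Mathlib

section
/- Let (M, φ) be a representation of the labelled quiver Q consistent with its labelling, and let u, v, w be vertices of Q. Then for all f ∈ R⟨X⟩_{v,w} and g ∈ R⟨X⟩_{u,v}, the product fg lies in R⟨X⟩_{u,w} and φ_{u,w}(fg) = φ_{v,w}(f) ∘ φ_{u,v}(g). -/
/-!
Appending a path from `u` to `v` labelled `m₂` to a path from `v` to `w` labelled `m₁` gives a
path from `u` to `w` labelled `m₁ m₂` whose map is the composite. Consistency makes the
realization of a monomial independent of the path chosen for it, so realization is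
multiplicative on monomials in the signature, and bilinearity of composition extends this to
polynomials `f, g` all of whose monomials lie in it.
-/

open scoped BigOperators

universe u₁ u₂ u₃ u₄ u₅

/-- A labelled quiver: a directed multigraph with edges labelled in `X`. -/
structure LQuiver (V : Type u₁) (E : Type u₂) (X : Type u₃) where
  src : E → V
  tgt : E → V
  lab : E → X

namespace LQuiver

variable {V : Type u₁} {E : Type u₂} {X : Type u₃}

/-- Paths in the quiver (possibly empty). -/
inductive Walk (Q : LQuiver V E X) : V → V → Type (max u₁ u₂)
  | nil (v : V) : Walk Q v v
  | cons {u : V} (e : E) (p : Walk Q u (Q.src e)) : Walk Q u (Q.tgt e)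

/-- The label of a path, a word in the free monoid `⟨X⟩`. -/
def wlabel (Q : LQuiver V E X) : ∀ {u v : V}, Q.Walk u v → FreeMonoid X
  | _, _, .nil _ => 1
  | _, _, .cons e p => FreeMonoid.of (Q.lab e) * Q.wlabel p

/-- The signature `σ(m)` of a monomial (word) `m`. -/
def sigW (Q : LQuiver V E X) (m : FreeMonoid X) : Set (V × V) :=
  {p : V × V | ∃ w : Q.Walk p.1 p.2, Q.wlabel w = m}

variable {R : Type u₄} [CommRing R]

/-- The signature `σ(f)` of a noncommutative polynomial `f ∈ R⟨X⟩`. -/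
def sig (Q : LQuiver V E X) (f : MonoidAlgebra R (FreeMonoid X)) : Set (V × V) :=
  ⋂ m ∈ f.coeff.support, Q.sigW m

/-- A polynomial is compatible with `Q` if its signature is nonempty. -/
def Compatible (Q : LQuiver V E X) (f : MonoidAlgebra R (FreeMonoid X)) : Prop :=
  (Q.sig f).Nonempty

/-- The projection `s(f)` of `σ(f)` on sources. -/
def srcSet (Q : LQuiver V E X) (f : MonoidAlgebra R (FreeMonoid X)) : Set V :=
  Prod.fst '' Q.sig f

/-- The projection `t(f)` of `σ(f)` on targets. -/
def tgtSet (Q : LQuiver V E X) (f : MonoidAlgebra R (FreeMonoid X)) : Set V :=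
  Prod.snd '' Q.sig f

/-- `f` is a `Q`-consequence of `F`. -/
def QConsequence (Q : LQuiver V E X) (F : Set (MonoidAlgebra R (FreeMonoid X)))
    (f : MonoidAlgebra R (FreeMonoid X)) : Prop :=
  Q.Compatible f ∧
  ∃ (n : ℕ) (g a b : Fin n → MonoidAlgebra R (FreeMonoid X)),
    (∀ i, g i ∈ F) ∧
    f = ∑ i, a i * g i * b i ∧
    ∀ uv ∈ Q.sig f, ∀ i, ∃ ui vi : V,
      (uv.1, ui) ∈ Q.sig (b i) ∧ (ui, vi) ∈ Q.sig (g i) ∧ (vi, uv.2) ∈ Q.sig (a i)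

end LQuiver

/-- The monomial `m` regarded as a polynomial in `R⟨X⟩`. -/
noncomputable def mono (R : Type u₄) [CommRing R] {X : Type u₃} (m : FreeMonoid X) :
    MonoidAlgebra R (FreeMonoid X) :=
  MonoidAlgebra.single m 1

/-- One rewriting step with divisor monomials selected by `DM`. -/
def RewriteStep {R : Type u₄} [CommRing R] {X : Type u₃}
    (G : Set (MonoidAlgebra R (FreeMonoid X)))
    (DM : MonoidAlgebra R (FreeMonoid X) → Set (FreeMonoid X))
    (f h : MonoidAlgebra R (FreeMonoid X)) : Prop :=
  ∃ g ∈ G, ∃ m ∈ DM g, ∃ a b : FreeMonoid X, ∃ lam : R,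
    a * m * b ∈ f.coeff.support ∧ h = f + lam • (mono R a * g * mono R b)

/-- A monomial order: a well-founded linear order compatible with multiplication. -/
def IsMonomialOrder {X : Type u₃} (ord : LinearOrder (FreeMonoid X)) : Prop :=
  WellFounded ord.lt ∧
    ∀ a b m m' : FreeMonoid X, ord.le m m' → ord.le (a * m * b) (a * m' * b)

/-- The leading monomial of a polynomial w.r.t. a linear order on monomials
(defined as `1` for the zero polynomial). -/
noncomputable def LM {K : Type u₄} [CommRing K] {X : Type u₃}
    (ord : LinearOrder (FreeMonoid X)) (f : MonoidAlgebra K (FreeMonoid X)) : FreeMonoid X :=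
  letI := ord
  letI : Decidable (f = 0) := Classical.dec _
  if h : f = 0 then 1 else f.coeff.support.max' (Finsupp.support_nonempty_iff.mpr (MonoidAlgebra.coeff_eq_zero.not.mpr h))

/-- One step of standard polynomial reduction w.r.t. a set `G` and a monomial order. -/
def ReduceStep {K : Type u₄} [Field K] {X : Type u₃} (ord : LinearOrder (FreeMonoid X))
    (G : Set (MonoidAlgebra K (FreeMonoid X)))
    (f h : MonoidAlgebra K (FreeMonoid X)) : Prop :=
  ∃ g ∈ G, g ≠ 0 ∧ ∃ a b : FreeMonoid X,
    a * LM ord g * b ∈ f.coeff.support ∧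
    h = f - (f.coeff (a * LM ord g * b) / g.coeff (LM ord g)) • (mono K a * g * mono K b)

/-- `f` is `Q`-order compatible w.r.t. the order `ord`. -/
def QOrderCompatible {V : Type u₁} {E : Type u₂} {X : Type u₃} {K : Type u₄} [CommRing K]
    (Q : LQuiver V E X) (ord : LinearOrder (FreeMonoid X))
    (f : MonoidAlgebra K (FreeMonoid X)) : Prop :=
  Q.Compatible f ∧ Q.sigW (LM ord f) = Q.sig f

/-- A representation of a labelled quiver. -/
structure QRep (R : Type u₄) [CommRing R] {V : Type u₁} {E : Type u₂} {X : Type u₃}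
    (Q : LQuiver V E X) where
  M : V → Type u₅
  [addcg : ∀ v, AddCommGroup (M v)]
  [mod : ∀ v, Module R (M v)]
  φ : (e : E) → M (Q.src e) →ₗ[R] M (Q.tgt e)

attribute [instance] QRep.addcg QRep.mod

namespace QRep

variable {R : Type u₄} [CommRing R] {V : Type u₁} {E : Type u₂} {X : Type u₃}
  {Q : LQuiver V E X}

/-- The linear map induced by a path. -/
def walkMap (ρ : QRep R Q) : ∀ {u v : V}, Q.Walk u v → (ρ.M u →ₗ[R] ρ.M v)
  | _, _, .nil _ => LinearMap.id
  | _, _, .cons e p => (ρ.φ e).comp (ρ.walkMap p)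

/-- The representation is consistent with the labelling: two paths with the same
source, target and label induce the same linear map. -/
def Consistent (ρ : QRep R Q) : Prop :=
  ∀ (u v : V) (p q : Q.Walk u v), Q.wlabel p = Q.wlabel q → ρ.walkMap p = ρ.walkMap q

/-- The realization `φ_{v,w}(f)` of a polynomial `f` (for a consistent representation and
`(v,w) ∈ σ(f)`, this is the well-defined linear map of the paper). -/
noncomputable def real (ρ : QRep R Q) (v w : V) (f : MonoidAlgebra R (FreeMonoid X)) :
    ρ.M v →ₗ[R] ρ.M w :=
  ∑ m ∈ f.coeff.support, f.coeff m •
    (letI : Decidable (∃ p : Q.Walk v w, Q.wlabel p = m) := Classical.dec _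
     if h : ∃ p : Q.Walk v w, Q.wlabel p = m then ρ.walkMap h.choose else 0)

end QRep

theorem LinearMap.sum_smul_comp_sum_smul {R M N P ι κ : Type*} [CommSemiring R]
    [AddCommMonoid M] [AddCommMonoid N] [AddCommMonoid P] [Module R M] [Module R N] [Module R P]
    (s : Finset ι) (t : Finset κ) (a : ι → R) (b : κ → R) (F : ι → N →ₗ[R] P)
    (G : κ → M →ₗ[R] N) :
    (∑ i ∈ s, a i • F i) ∘ₗ (∑ j ∈ t, b j • G j) =
      ∑ i ∈ s, ∑ j ∈ t, (a i * b j) • (F i ∘ₗ G j) := by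
  ext x
  simp only [coe_comp, coe_sum, coe_smul, Function.comp_apply, Finset.sum_apply, Pi.smul_apply,
    map_sum, map_smul, Finset.smul_sum, smul_smul]

namespace LQuiver

variable {V : Type u₁} {E : Type u₂} {X : Type u₃} {Q : LQuiver V E X}

def Walk.append : ∀ {u v w : V}, Q.Walk v w → Q.Walk u v → Q.Walk u w
  | _, _, _, .nil _, q => q
  | _, _, _, .cons e p, q => .cons e (p.append q)

theorem wlabel_append : ∀ {u v w : V} (p : Q.Walk v w) (q : Q.Walk u v),
    Q.wlabel (p.append q) = Q.wlabel p * Q.wlabel q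
  | _, _, _, .nil _, q => by simp [Walk.append, wlabel]
  | _, _, _, .cons e p, q => by simp [Walk.append, wlabel, wlabel_append p q, mul_assoc]

theorem mul_mem_sigW {u v w : V} {m₁ m₂ : FreeMonoid X}
    (h₁ : (v, w) ∈ Q.sigW m₁) (h₂ : (u, v) ∈ Q.sigW m₂) : (u, w) ∈ Q.sigW (m₁ * m₂) := by
  obtain ⟨p, rfl⟩ := h₁
  obtain ⟨q, rfl⟩ := h₂
  exact ⟨p.append q, wlabel_append p q⟩

variable {R : Type u₄} [CommRing R]

theorem mem_sig_iff {f : MonoidAlgebra R (FreeMonoid X)} {uv : V × V} :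
    uv ∈ Q.sig f ↔ ∀ m ∈ f.coeff.support, uv ∈ Q.sigW m :=
  Set.mem_iInter₂

theorem mul_mem_sig {u v w : V} {f g : MonoidAlgebra R (FreeMonoid X)}
    (hf : (v, w) ∈ Q.sig f) (hg : (u, v) ∈ Q.sig g) : (u, w) ∈ Q.sig (f * g) := by
  classical
  refine mem_sig_iff.2 fun m hm => ?_
  obtain ⟨m₁, hm₁, m₂, hm₂, rfl⟩ :=
    Finset.mem_mul.1 (MonoidAlgebra.support_coeff_mul_subset f g hm)
  exact mul_mem_sigW (mem_sig_iff.1 hf m₁ hm₁) (mem_sig_iff.1 hg m₂ hm₂)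

end LQuiver

namespace QRep

variable {R : Type u₄} [CommRing R] {V : Type u₁} {E : Type u₂} {X : Type u₃}
  {Q : LQuiver V E X} (ρ : QRep R Q)

theorem walkMap_append : ∀ {u v w : V} (p : Q.Walk v w) (q : Q.Walk u v),
    ρ.walkMap (p.append q) = ρ.walkMap p ∘ₗ ρ.walkMap q
  | _, _, _, .nil _, q => by simp [LQuiver.Walk.append, walkMap]
  | _, _, _, .cons e p, q => by
      simp [LQuiver.Walk.append, walkMap, walkMap_append p q, LinearMap.comp_assoc]

noncomputable def realMono (v w : V) (m : FreeMonoid X) : ρ.M v →ₗ[R] ρ.M w :=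
  letI : Decidable (∃ p : Q.Walk v w, Q.wlabel p = m) := Classical.dec _
  if h : ∃ p : Q.Walk v w, Q.wlabel p = m then ρ.walkMap h.choose else 0

noncomputable def realₗ (v w : V) : MonoidAlgebra R (FreeMonoid X) →ₗ[R] (ρ.M v →ₗ[R] ρ.M w) :=
  Finsupp.lsum R (fun m => LinearMap.toSpanSingleton R _ (ρ.realMono v w m)) ∘ₗ
    (MonoidAlgebra.coeffLinearEquiv R).toLinearMap

theorem real_eq_sum (v w : V) (f : MonoidAlgebra R (FreeMonoid X)) :
    ρ.real v w f = ∑ m ∈ f.coeff.support, f.coeff m • ρ.realMono v w m :=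
  rfl

theorem real_eq_realₗ (v w : V) (f : MonoidAlgebra R (FreeMonoid X)) :
    ρ.real v w f = ρ.realₗ v w f :=
  rfl

theorem realₗ_single (v w : V) (m : FreeMonoid X) (c : R) :
    ρ.realₗ v w (MonoidAlgebra.single m c) = c • ρ.realMono v w m :=
  Finsupp.sum_single_index (by simp)

variable {ρ}

theorem realMono_wlabel (hρ : ρ.Consistent) {v w : V} (p : Q.Walk v w) :
    ρ.realMono v w (Q.wlabel p) = ρ.walkMap p := by
  have h : ∃ q : Q.Walk v w, Q.wlabel q = Q.wlabel p := ⟨p, rfl⟩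
  rw [realMono, dif_pos h]
  exact hρ v w _ p h.choose_spec

theorem realMono_mul (hρ : ρ.Consistent) {u v w : V} {m₁ m₂ : FreeMonoid X}
    (h₁ : (v, w) ∈ Q.sigW m₁) (h₂ : (u, v) ∈ Q.sigW m₂) :
    ρ.realMono u w (m₁ * m₂) = ρ.realMono v w m₁ ∘ₗ ρ.realMono u v m₂ := by
  obtain ⟨p, rfl⟩ := h₁
  obtain ⟨q, rfl⟩ := h₂
  rw [← LQuiver.wlabel_append, realMono_wlabel hρ, realMono_wlabel hρ, realMono_wlabel hρ,
    walkMap_append]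

end QRep

/-- for a consistent representation, `φ_{u,w}(fg) = φ_{v,w}(f) ∘ φ_{u,v}(g)`. -/
theorem real_mul {V E X R : Type*} [CommRing R] {Q : LQuiver V E X}
    (ρ : QRep R Q) (hρ : ρ.Consistent) (u v w : V)
    (f g : MonoidAlgebra R (FreeMonoid X))
    (hf : (v, w) ∈ Q.sig f) (hg : (u, v) ∈ Q.sig g) :
    (u, w) ∈ Q.sig (f * g) ∧
      ρ.real u w (f * g) = (ρ.real v w f).comp (ρ.real u v g) := by
  refine ⟨LQuiver.mul_mem_sig hf hg, ?_⟩
  rw [QRep.real_eq_realₗ, MonoidAlgebra.mul_def, QRep.real_eq_sum, QRep.real_eq_sum,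
    LinearMap.sum_smul_comp_sum_smul]
  simp only [Finsupp.sum, map_sum, QRep.realₗ_single]
  refine Finset.sum_congr rfl fun m₁ hm₁ => Finset.sum_congr rfl fun m₂ hm₂ => ?_
  rw [QRep.realMono_mul hρ (LQuiver.mem_sig_iff.1 hf m₁ hm₁) (LQuiver.mem_sig_iff.1 hg m₂ hm₂)]
end

section
/- Assume all edges of the labelled quiver Q have unique labels (the labelling l : E → X is injective). Fix a monomial order ≤ on ⟨X⟩ and let g, g' ∈ K⟨X⟩ be nonzero polynomials compatible with Q. If there exist words a, r, b ∈ ⟨X⟩ with r nonempty such that LM(g) = a·r and LM(g') = r·b (an overlap of the leading monomials), then the word a·r·b is compatible with Q, i.e., σ(a·r·b) ≠ ∅. -/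
open scoped BigOperators

universe u₁ u₂ u₃ u₄ u₅

/-!
Labels are read right to left, so a path labelled `a * r` traverses its `r`-part first. With unique
labels, all paths labelled by the nonempty word `r` start at the same vertex. Hence the `b`-part of a
path labelled `r * b` (which exists since `LM g'` lies in the support of the compatible `g'`) ends
where a path labelled `a * r` starts, and the two glue to a path labelled `a * r * b`.
-/

theorem FreeMonoid.of_mul_eq_of_mul_iff {α : Type*} {x y : α} {m m' : FreeMonoid α} :
    of x * m = of y * m' ↔ x = y ∧ m = m' := by
  rw [← FreeMonoid.toList.injective.eq_iff, FreeMonoid.toList_of_mul, FreeMonoid.toList_of_mul,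
    List.cons.injEq, FreeMonoid.toList.injective.eq_iff]

namespace LQuiver

variable {V E X : Type*} {Q : LQuiver V E X}

namespace Walk

theorem wlabel_nil (v : V) : Q.wlabel (.nil v) = 1 := by
  rw [wlabel]

theorem wlabel_cons {u : V} (e : E) (p : Q.Walk u (Q.src e)) :
    Q.wlabel (.cons e p) = FreeMonoid.of (Q.lab e) * Q.wlabel p := by
  rw [wlabel]

def append_s16 : ∀ {u v w : V}, Q.Walk v w → Q.Walk u v → Q.Walk u w
  | _, _, _, .nil _, q => q
  | _, _, _, .cons e p, q => .cons e (append_s16 p q)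

theorem wlabel_append : ∀ {u v w : V} (p : Q.Walk v w) (q : Q.Walk u v),
    Q.wlabel (p.append_s16 q) = Q.wlabel p * Q.wlabel q
  | _, _, _, .nil _, q => by rw [append_s16, wlabel_nil, one_mul]
  | _, _, _, .cons e p, q => by
    rw [append_s16, wlabel_cons, wlabel_cons, wlabel_append p q, mul_assoc]

theorem eq_of_wlabel_eq_one : ∀ {u v : V} (p : Q.Walk u v), Q.wlabel p = 1 → u = v
  | _, _, .nil _, _ => rfl
  | _, _, .cons e p, h => absurd (mul_eq_one'.mp (wlabel_cons e p ▸ h)).1 (FreeMonoid.of_ne_one _)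

theorem exists_wlabel_eq_of_wlabel_eq_mul : ∀ {u w : V} (p : Q.Walk u w) (m₁ m₂ : FreeMonoid X),
    Q.wlabel p = m₁ * m₂ →
    ∃ (v : V) (p₁ : Q.Walk v w) (p₂ : Q.Walk u v), Q.wlabel p₁ = m₁ ∧ Q.wlabel p₂ = m₂
  | _, _, .nil v, m₁, m₂, h => by
    obtain ⟨rfl, rfl⟩ := mul_eq_one'.mp (wlabel_nil v ▸ h).symm
    exact ⟨v, .nil v, .nil v, wlabel_nil v, wlabel_nil v⟩
  | _, _, .cons e p, m₁, m₂, h => by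
    cases m₁ with
    | one => exact ⟨_, .nil _, .cons e p, wlabel_nil _, by rw [h, one_mul]⟩
    | of_mul x m₁ =>
      rw [wlabel_cons, mul_assoc, FreeMonoid.of_mul_eq_of_mul_iff] at h
      obtain ⟨v, p₁, p₂, hp₁, hp₂⟩ := exists_wlabel_eq_of_wlabel_eq_mul p m₁ m₂ h.2
      exact ⟨v, .cons e p₁, p₂, by rw [wlabel_cons, hp₁, h.1], hp₂⟩

/-- With injective labels a walk is determined by its label, so in particular its source is. -/
theorem src_eq_of_wlabel_eq (hinj : Function.Injective Q.lab) :
    ∀ {u v u' v' : V} (p : Q.Walk u v) (q : Q.Walk u' v'),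
      Q.wlabel p = Q.wlabel q → Q.wlabel p ≠ 1 → u = u'
  | _, _, _, _, .nil _, _, _, hne => absurd (wlabel_nil _) hne
  | _, _, _, _, .cons _ _, .nil _, h, hne => absurd (h.trans (wlabel_nil _)) hne
  | _, _, _, _, .cons e p, .cons e' q, h, _ => by
    rw [wlabel_cons, wlabel_cons, FreeMonoid.of_mul_eq_of_mul_iff] at h
    by_cases hp : Q.wlabel p = 1
    · rw [eq_of_wlabel_eq_one p hp, eq_of_wlabel_eq_one q (h.2 ▸ hp), hinj h.1]
    · exact src_eq_of_wlabel_eq hinj p q h.2 hp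

end Walk

theorem mem_sigW_mul {u w : V} {m₁ m₂ : FreeMonoid X} :
    (u, w) ∈ Q.sigW (m₁ * m₂) ↔ ∃ v, (u, v) ∈ Q.sigW m₂ ∧ (v, w) ∈ Q.sigW m₁ := by
  constructor
  · rintro ⟨p, hp⟩
    obtain ⟨v, p₁, p₂, hp₁, hp₂⟩ := p.exists_wlabel_eq_of_wlabel_eq_mul m₁ m₂ hp
    exact ⟨v, ⟨p₂, hp₂⟩, ⟨p₁, hp₁⟩⟩
  · rintro ⟨v, ⟨p₂, hp₂⟩, ⟨p₁, hp₁⟩⟩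
    exact ⟨p₁.append_s16 p₂, by rw [Walk.wlabel_append, hp₁, hp₂]⟩

theorem fst_eq_of_mem_sigW (hinj : Function.Injective Q.lab) {m : FreeMonoid X} (hm : m ≠ 1)
    {x y : V × V} (hx : x ∈ Q.sigW m) (hy : y ∈ Q.sigW m) : x.1 = y.1 := by
  obtain ⟨p, rfl⟩ := hx
  obtain ⟨q, hq⟩ := hy
  exact Walk.src_eq_of_wlabel_eq hinj p q hq.symm hm

theorem sig_subset_sigW {R : Type*} [CommRing R] {f : MonoidAlgebra R (FreeMonoid X)}
    {m : FreeMonoid X} (hm : m ∈ f.coeff.support) : Q.sig f ⊆ Q.sigW m :=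
  Set.biInter_subset_of_mem hm

end LQuiver

theorem LM_mem_support {K X : Type*} [CommRing K] (ord : LinearOrder (FreeMonoid X))
    {f : MonoidAlgebra K (FreeMonoid X)} (hf : f ≠ 0) : LM ord f ∈ f.coeff.support := by
  rw [LM, dif_neg hf]
  exact Finset.max'_mem _ _

theorem LQuiver.Compatible.sigW_LM_nonempty {V E X K : Type*} [CommRing K] {Q : LQuiver V E X}
    (ord : LinearOrder (FreeMonoid X)) {f : MonoidAlgebra K (FreeMonoid X)}
    (hf : Q.Compatible f) (hf0 : f ≠ 0) : (Q.sigW (LM ord f)).Nonempty :=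
  hf.mono (LQuiver.sig_subset_sigW (LM_mem_support ord hf0))

theorem overlap_source_compatible_general {V E X K : Type*} [Field K] (Q : LQuiver V E X)
    (hinj : Function.Injective Q.lab)
    (ord : LinearOrder (FreeMonoid X))
    (g g' : MonoidAlgebra K (FreeMonoid X)) (hg0 : g ≠ 0) (hg'0 : g' ≠ 0)
    (hg : Q.Compatible g) (hg' : Q.Compatible g')
    (a r b : FreeMonoid X) (hr : r ≠ 1)
    (h1 : LM ord g = a * r) (h2 : LM ord g' = r * b) :
    (Q.sigW (a * r * b)).Nonempty := by
  obtain ⟨⟨u, v⟩, har⟩ := h1 ▸ hg.sigW_LM_nonempty ord hg0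
  obtain ⟨⟨u', v'⟩, hrb⟩ := h2 ▸ hg'.sigW_LM_nonempty ord hg'0
  obtain ⟨x, hr₁, -⟩ := LQuiver.mem_sigW_mul.mp har
  obtain ⟨y, hb, hr₂⟩ := LQuiver.mem_sigW_mul.mp hrb
  obtain rfl : y = u := LQuiver.fst_eq_of_mem_sigW hinj hr hr₂ hr₁
  exact ⟨(u', v), LQuiver.mem_sigW_mul.mpr ⟨y, hb, har⟩⟩

/-- with unique labels, the source of an overlap ambiguity of two compatible
polynomials is compatible. -/
theorem overlap_source_compatible {V E X K : Type*} [Field K] (Q : LQuiver V E X)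
    (hinj : Function.Injective Q.lab)
    (ord : LinearOrder (FreeMonoid X)) (hord : IsMonomialOrder ord)
    (g g' : MonoidAlgebra K (FreeMonoid X)) (hg0 : g ≠ 0) (hg'0 : g' ≠ 0)
    (hg : Q.Compatible g) (hg' : Q.Compatible g')
    (a r b : FreeMonoid X) (hr : r ≠ 1)
    (h1 : LM ord g = a * r) (h2 : LM ord g' = r * b) :
    (Q.sigW (a * r * b)).Nonempty :=
  overlap_source_compatible_general Q hinj ord g g' hg0 hg'0 hg hg' a r b hr h1 h2
end
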